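/- Let d ≥ 3, fix ζ' ∈ ℝ^d with first coordinate ζ₁', and set ρ(ζ) = |ζ − ζ'|. Define B(ζ) = (d−2)·ζ₁·(ζ₁' − ζ₁)·ρ(ζ)^{−d} − ρ(ζ)^{2−d}. Then for every ζ with ζ₁ ≠ 0 and ζ ≠ ζ': ζ₁·ΔB(ζ) = 2·∂B/∂ζ₁(ζ). Equivalently, B satisfies ∇·(ζ₁⁻² ∇B) = 0 away from the point ζ'. -/

import Mathlib

/-- First partial derivative in direction `i` of a scalar function on `ℝ^d`. -/
noncomputable def pd {d : ℕ} (i : Fin d) (f : EuclideanSpace ℝ (Fin d) → ℝ)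
    (ζ : EuclideanSpace ℝ (Fin d)) : ℝ :=
  fderiv ℝ f ζ (EuclideanSpace.single i 1)

/-- Laplacian `Δ = Σᵢ ∂²/∂ζᵢ²` of a scalar function on `ℝ^d`. -/
noncomputable def lap {d : ℕ} (f : EuclideanSpace ℝ (Fin d) → ℝ)
    (ζ : EuclideanSpace ℝ (Fin d)) : ℝ :=
  ∑ i : Fin d, pd i (pd i f) ζ

/-!
With `G = ρ^{2-d}` the fundamental solution, `B = ζ₁ ∂₁G − G`. For any `G` harmonic near a point,
`Δ(ζ₁ ∂₁G) = ζ₁ ∂₁ΔG + 2 ∂₁²G = 2 ∂₁²G` while `∂₁(ζ₁ ∂₁G − G) = ζ₁ ∂₁²G`, so `ζ₁ ΔB = 2 ∂₁B`.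
Harmonicity of `G` is the case `p = 2 − d` of `Δ ρ^p = p (p + d − 2) ρ^{p−2}`.
-/

open Filter Topology
open scoped ContDiff

section PartialDerivatives

variable {d : ℕ} {f g : EuclideanSpace ℝ (Fin d) → ℝ} {f' : EuclideanSpace ℝ (Fin d) →L[ℝ] ℝ}
  {x : EuclideanSpace ℝ (Fin d)} {U : Set (EuclideanSpace ℝ (Fin d))}

theorem HasFDerivAt.pd_eq (h : HasFDerivAt f f' x) (i : Fin d) :
    pd i f x = f' (EuclideanSpace.single i 1) := by
  rw [pd, h.fderiv]

theorem Filter.EventuallyEq.pd_eq (h : f =ᶠ[𝓝 x] g) (i : Fin d) : pd i f x = pd i g x := by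
  rw [_root_.pd, _root_.pd, h.fderiv_eq]

theorem Filter.EventuallyEq.pd (h : f =ᶠ[𝓝 x] g) (i : Fin d) : pd i f =ᶠ[𝓝 x] pd i g :=
  h.fderiv.mono fun y hy => by rw [_root_.pd, _root_.pd, hy]

theorem Filter.EventuallyEq.lap_eq (h : f =ᶠ[𝓝 x] g) : lap f x = lap g x :=
  Finset.sum_congr rfl fun i _ => (h.pd i).pd_eq i

theorem pd_const (c : ℝ) (i : Fin d) : pd i (fun _ => c) x = 0 := by
  simp [pd]

theorem pd_coord (i j : Fin d) : pd i (fun y => y j) x = if j = i then 1 else 0 := by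
  rw [(PiLp.hasFDerivAt_apply 2 x j).pd_eq]
  simp [PiLp.single_apply]

theorem pd_sub (hf : DifferentiableAt ℝ f x) (hg : DifferentiableAt ℝ g x) (i : Fin d) :
    pd i (fun y => f y - g y) x = pd i f x - pd i g x := by
  simp [pd, fderiv_fun_sub hf hg]

theorem pd_add (hf : DifferentiableAt ℝ f x) (hg : DifferentiableAt ℝ g x) (i : Fin d) :
    pd i (fun y => f y + g y) x = pd i f x + pd i g x := by
  simp [pd, fderiv_fun_add hf hg]

theorem pd_mul (hf : DifferentiableAt ℝ f x) (hg : DifferentiableAt ℝ g x) (i : Fin d) :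
    pd i (fun y => f y * g y) x = pd i f x * g x + f x * pd i g x := by
  simp only [pd, fderiv_fun_mul hf hg, add_apply, smul_apply, smul_eq_mul]
  ring

theorem pd_sum {ι : Type*} (s : Finset ι) {F : ι → EuclideanSpace ℝ (Fin d) → ℝ}
    (hF : ∀ k ∈ s, DifferentiableAt ℝ (F k) x) (i : Fin d) :
    pd i (fun y => ∑ k ∈ s, F k y) x = ∑ k ∈ s, pd i (F k) x := by
  simp [pd, fderiv_fun_sum hF]

theorem ContDiffOn.pd (hf : ContDiffOn ℝ ∞ f U) (hU : IsOpen U) (i : Fin d) :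
    ContDiffOn ℝ ∞ (pd i f) U :=
  (hf.fderiv_of_isOpen hU (by simp)).clm_apply contDiffOn_const

theorem ContDiffOn.differentiableAt_of_isOpen (hf : ContDiffOn ℝ ∞ f U) (hU : IsOpen U)
    (hx : x ∈ U) : DifferentiableAt ℝ f x :=
  (hf.differentiableOn (by simp)).differentiableAt (hU.mem_nhds hx)

theorem pd_comm (hf : ContDiffAt ℝ 2 f x) (i j : Fin d) :
    pd i (pd j f) x = pd j (pd i f) x := by
  have hdiff : DifferentiableAt ℝ (fderiv ℝ f) x :=
    (hf.fderiv_right (m := 1) le_rfl).differentiableAt one_ne_zero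
  unfold pd
  rw [fderiv_clm_apply hdiff (differentiableAt_const _),
    fderiv_clm_apply hdiff (differentiableAt_const _)]
  simpa using hf.isSymmSndFDerivAt (by simp) _ _

theorem lap_sub (hU : IsOpen U) (hf : ContDiffOn ℝ ∞ f U) (hg : ContDiffOn ℝ ∞ g U) (hx : x ∈ U) :
    lap (fun y => f y - g y) x = lap f x - lap g x := by
  have hpd : ∀ i, pd i (fun y => f y - g y) =ᶠ[𝓝 x] fun y => pd i f y - pd i g y := fun i =>
    eventually_of_mem (hU.mem_nhds hx) fun y hy =>
      pd_sub (hf.differentiableAt_of_isOpen hU hy) (hg.differentiableAt_of_isOpen hU hy) i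
  simp only [lap, ← Finset.sum_sub_distrib]
  refine Finset.sum_congr rfl fun i _ => ?_
  rw [(hpd i).pd_eq, pd_sub ((hf.pd hU i).differentiableAt_of_isOpen hU hx)
    ((hg.pd hU i).differentiableAt_of_isOpen hU hx)]

theorem lap_coord_mul (hU : IsOpen U) (hf : ContDiffOn ℝ ∞ f U) (hx : x ∈ U) (j : Fin d) :
    lap (fun y => y j * f y) x = x j * lap f x + 2 * pd j f x := by
  have hcoord : ∀ y, DifferentiableAt ℝ (fun y : EuclideanSpace ℝ (Fin d) => y j) y := fun y =>
    (PiLp.hasFDerivAt_apply 2 y j).differentiableAt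
  have hpd : ∀ i, pd i (fun y => y j * f y) =ᶠ[𝓝 x]
      fun y => (if j = i then 1 else 0) * f y + y j * pd i f y := fun i =>
    eventually_of_mem (hU.mem_nhds hx) fun y hy => by
      rw [pd_mul (hcoord y) (hf.differentiableAt_of_isOpen hU hy), pd_coord]
  have hpd2 : ∀ i, pd i (pd i fun y => y j * f y) x =
      x j * pd i (pd i f) x + 2 * (if j = i then pd i f x else 0) := fun i => by
    have hf' := hf.differentiableAt_of_isOpen hU hx
    have hpdf := (hf.pd hU i).differentiableAt_of_isOpen hU hx
    rw [(hpd i).pd_eq, pd_add (by fun_prop) (by fun_prop), pd_mul (differentiableAt_const _) hf',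
      pd_mul (hcoord x) hpdf, pd_coord, pd_const]
    split_ifs <;> ring
  simp only [lap, hpd2, Finset.sum_add_distrib, ← Finset.mul_sum, Finset.sum_ite_eq,
    Finset.mem_univ, if_true]

theorem lap_pd_comm (hU : IsOpen U) (hf : ContDiffOn ℝ ∞ f U) (hx : x ∈ U) (j : Fin d) :
    lap (pd j f) x = pd j (lap f) x := by
  have hC2 : ∀ {g : EuclideanSpace ℝ (Fin d) → ℝ}, ContDiffOn ℝ ∞ g U → ∀ y ∈ U,
      ContDiffAt ℝ 2 g y := fun hg y hy =>
    (hg.contDiffAt (hU.mem_nhds hy)).of_le (WithTop.coe_le_coe.2 le_top)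
  have hswap : ∀ i, pd i (pd j f) =ᶠ[𝓝 x] pd j (pd i f) := fun i =>
    eventually_of_mem (hU.mem_nhds hx) fun y hy => pd_comm (hC2 hf y hy) i j
  calc lap (pd j f) x = ∑ i, pd i (pd j (pd i f)) x :=
        Finset.sum_congr rfl fun i _ => (hswap i).pd_eq i
    _ = ∑ i, pd j (pd i (pd i f)) x :=
        Finset.sum_congr rfl fun i _ => pd_comm (hC2 (hf.pd hU i) x hx) i j
    _ = pd j (lap f) x :=
        (pd_sum _ (fun i _ => ((hf.pd hU i).pd hU i).differentiableAt_of_isOpen hU hx) j).symm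

theorem coord_mul_lap_eq_two_mul_pd_of_lap_eq_zero (hU : IsOpen U) (hf : ContDiffOn ℝ ∞ f U)
    (hharm : ∀ y ∈ U, lap f y = 0) (hx : x ∈ U) (j : Fin d) :
    x j * lap (fun y => y j * pd j f y - f y) x = 2 * pd j (fun y => y j * pd j f y - f y) x := by
  have hcoord : ContDiffOn ℝ ∞ (fun y : EuclideanSpace ℝ (Fin d) => y j) U :=
    (contDiff_piLp_apply (p := 2)).contDiffOn
  have hlap_pd : pd j (lap f) x = 0 := by
    have : lap f =ᶠ[𝓝 x] fun _ => 0 := eventually_of_mem (hU.mem_nhds hx) hharm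
    rw [this.pd_eq, pd_const]
  have hlap : lap (fun y => y j * pd j f y - f y) x = 2 * pd j (pd j f) x := by
    rw [lap_sub hU (hcoord.mul (hf.pd hU j)) hf hx, lap_coord_mul hU (hf.pd hU j) hx,
      lap_pd_comm hU hf hx, hlap_pd, hharm x hx]
    ring
  have hpd : pd j (fun y => y j * pd j f y - f y) x = x j * pd j (pd j f) x := by
    rw [pd_sub ((hcoord.mul (hf.pd hU j)).differentiableAt_of_isOpen hU hx)
      (hf.differentiableAt_of_isOpen hU hx), pd_mul ((hcoord.differentiableAt_of_isOpen hU hx))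
      ((hf.pd hU j).differentiableAt_of_isOpen hU hx), pd_coord]
    simp
  rw [hlap, hpd]
  ring

end PartialDerivatives

section DistancePowers

variable {d : ℕ} {x y : EuclideanSpace ℝ (Fin d)}

theorem hasFDerivAt_dist_rpow (p : ℝ) (hx : x ≠ y) :
    HasFDerivAt (fun η => dist η y ^ p) ((p * dist x y ^ (p - 2)) • innerSL ℝ (x - y)) x := by
  have hsq : ∀ (q : ℝ) η, dist η y ^ q = (‖η - y‖ ^ 2) ^ (q / 2) := fun q η => by
    rw [dist_eq_norm, ← Real.rpow_natCast_mul (norm_nonneg _)]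
    ring_nf
  have hpos : ‖x - y‖ ^ 2 ≠ 0 := by
    simpa [sub_eq_zero] using hx
  have h := ((hasFDerivAt_id x).sub_const y).norm_sq.rpow_const (p := p / 2) (Or.inl hpos)
  refine (h.congr_of_eventuallyEq (.of_forall fun η => hsq p η)).congr_fderiv ?_
  ext v
  simp only [id, hsq (p - 2), map_sub, ContinuousLinearMap.comp_id, smul_apply, sub_apply,
    innerSL_apply_apply, nsmul_eq_mul, Nat.cast_ofNat, smul_eq_mul]
  ring_nf

theorem pd_dist_rpow (p : ℝ) (hx : x ≠ y) (i : Fin d) :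
    pd i (fun η => dist η y ^ p) x = p * (x i - y i) * dist x y ^ (p - 2) := by
  rw [(hasFDerivAt_dist_rpow p hx).pd_eq]
  simp only [map_sub, smul_apply, sub_apply, innerSL_apply_apply,
    EuclideanSpace.inner_single_right, Real.ringHom_apply, one_mul, smul_eq_mul]
  ring

theorem contDiffOn_dist_rpow (p : ℝ) (y : EuclideanSpace ℝ (Fin d)) :
    ContDiffOn ℝ ∞ (fun η => dist η y ^ p) {y}ᶜ := fun η hη => by
  have hne : η - y ≠ 0 := sub_ne_zero.2 hη
  simp_rw [dist_eq_norm]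
  have hsub : ContDiffAt ℝ ∞ (fun η => η - y) η := by fun_prop
  exact (((contDiffAt_norm ℝ hne).comp η hsub).rpow_const_of_ne
    (norm_ne_zero_iff.2 hne)).contDiffWithinAt

theorem lap_dist_rpow (p : ℝ) (hx : x ≠ y) :
    lap (fun η => dist η y ^ p) x = p * (p + d - 2) * dist x y ^ (p - 2) := by
  have hpd : ∀ i, pd i (fun η => dist η y ^ p) =ᶠ[𝓝 x]
      fun η => p * (η i - y i) * dist η y ^ (p - 2) := fun i =>
    eventually_of_mem (isOpen_compl_singleton.mem_nhds hx) fun η hη => pd_dist_rpow p hη i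
  have hpd2 : ∀ i, pd i (pd i fun η => dist η y ^ p) x =
      p * dist x y ^ (p - 2) + p * (p - 2) * dist x y ^ (p - 4) * (x i - y i) ^ 2 := fun i => by
    rw [(hpd i).pd_eq, ((((PiLp.hasFDerivAt_apply 2 x i).sub_const (y i)).const_mul p).fun_mul
      (hasFDerivAt_dist_rpow (p - 2) hx)).pd_eq]
    simp only [map_sub, add_apply, smul_apply, sub_apply, innerSL_apply_apply,
      EuclideanSpace.inner_single_right, Real.ringHom_apply, one_mul, smul_eq_mul,
      PiLp.proj_apply, PiLp.single_eq_same, mul_one]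
    ring_nf
  have hdist : ∑ i, (x i - y i) ^ 2 = dist x y ^ 2 := by
    rw [EuclideanSpace.dist_eq, Real.sq_sqrt (by positivity)]
    simp [Real.dist_eq, sq_abs]
  have hpow : dist x y ^ (p - 4) * dist x y ^ 2 = dist x y ^ (p - 2) := by
    rw [← Real.rpow_natCast, ← Real.rpow_add (dist_pos.2 hx)]
    ring_nf
  simp only [lap, hpd2, Finset.sum_add_distrib, ← Finset.mul_sum, hdist, Finset.sum_const,
    Finset.card_univ, Fintype.card_fin, nsmul_eq_mul]
  rw [mul_assoc _ _ (dist x y ^ 2), hpow]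
  ring

end DistancePowers

/-- The dipole part `B(ζ) = (d−2)·ζ₁·(ζ₁' − ζ₁)·ρ^{−d} − ρ^{2−d}`,
`ρ = |ζ − ζ'|`, satisfies `ζ₁·ΔB = 2·∂₁B` (equivalently `∇·(ζ₁⁻² ∇B) = 0`)
away from `ζ'` (for `d ≥ 3`). -/
theorem B_is_L_harmonic (d : ℕ) (hd : 3 ≤ d)
    (ζ' : EuclideanSpace ℝ (Fin d))
    (B : EuclideanSpace ℝ (Fin d) → ℝ)
    (hB : ∀ η, B η =
      ((d : ℝ) - 2) * η (⟨0, by omega⟩ : Fin d) *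
          (ζ' (⟨0, by omega⟩ : Fin d) - η (⟨0, by omega⟩ : Fin d)) *
          dist η ζ' ^ (-(d : ℝ)) -
        dist η ζ' ^ ((2 : ℝ) - d)) :
    ∀ ζ : EuclideanSpace ℝ (Fin d),
      ζ (⟨0, by omega⟩ : Fin d) ≠ 0 → ζ ≠ ζ' →
        ζ (⟨0, by omega⟩ : Fin d) * lap B ζ =
          2 * pd (⟨0, by omega⟩ : Fin d) B ζ := by
  intro ζ _ hζ
  set i₀ : Fin d := ⟨0, by omega⟩
  set G := fun η : EuclideanSpace ℝ (Fin d) => dist η ζ' ^ ((2 : ℝ) - d)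
  have hB_eq : B =ᶠ[𝓝 ζ] fun η => η i₀ * pd i₀ G η - G η := by
    filter_upwards [isOpen_compl_singleton.mem_nhds hζ] with η hη
    rw [hB, pd_dist_rpow _ hη]
    simp only [G]
    ring_nf
  rw [hB_eq.lap_eq, hB_eq.pd_eq]
  refine coord_mul_lap_eq_two_mul_pd_of_lap_eq_zero isOpen_compl_singleton
    (contDiffOn_dist_rpow _ _) (fun η hη => ?_) hζ i₀
  rw [lap_dist_rpow _ hη]
  ring
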